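/- Let p be a prime, let A be a θ^p-ring, let e ≥ 1, and let a ∈ A satisfy p^e·a = 0. Then a^{p^e+p^{e−1}} = 0. -/

import Mathlib

/-!
If `p^f x = 0` with `f ≥ 1`, expanding `0 = θ(p^f x) = θ(p^f) ψ(x) + p^{fp} θ(x)` with
`θ(p^f) = (p^{fp} - p^f) / p` gives `p^f θ(x) = p^{f-1} x^p`, hence also `p^{f-1} ψ(x) = 0`.
With `N(t) = p^t + p^{t-1}` (and `N(0) = 1`) one shows by induction on `t` that
`p^{e-t} a^{N(t)} = 0`. In `θ(a^s) = θ(a) ∑_{i<s} a^{pi} ψ(a)^{s-1-i}` for `s = N(t)`, each term is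
killed by `p^{e-t}`: by the stage `t` for `a` when `pi ≥ s`, and otherwise by the stage `t - 1`
for `ψ(a)`, which is `p^{e-1}`-torsion. The identity above applied to `x = a^s` then yields
`p^{e-t-1} a^{p N(t)} = 0`.
-/

/-- A `θ^p`-ring: a commutative ring `A` equipped with maps `θ ψ : A → A` such that
`ψ` is a ring homomorphism, `ψ a = a^p - p * θ a`, and `θ` satisfies the usual
identities of a `p`-typical `δ`-structure. -/
structure IsThetaRing (p : ℕ) {A : Type*} [CommRing A] (θ ψ : A → A) : Prop where
  psi_one : ψ 1 = 1
  psi_add : ∀ a b : A, ψ (a + b) = ψ a + ψ b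
  psi_mul : ∀ a b : A, ψ (a * b) = ψ a * ψ b
  psi_def : ∀ a : A, ψ a = a ^ p - (p : A) * θ a
  theta_one : θ 1 = 0
  theta_add : ∀ a b : A, θ (a + b) = θ a + θ b +
    ∑ j ∈ Finset.Ioo 0 p, ((p.choose j / p : ℕ) : A) * a ^ j * b ^ (p - j)
  theta_mul : ∀ a b : A, θ (a * b) = θ a * ψ b + a ^ p * θ b
  theta_psi : ∀ a : A, θ (ψ a) = ψ (θ a)

open Finset

theorem Nat.add_one_pow_of_prime {p : ℕ} (hp : p.Prime) (n : ℕ) :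
    (n + 1) ^ p = n ^ p + p * ∑ j ∈ Ioo 0 p, p.choose j / p * n ^ j + 1 := by
  have hrange : range p = insert 0 (Ioo 0 p) := by
    rw [range_eq_Ico, ← Ioo_insert_left hp.pos]
  have hdiv : ∀ j ∈ Ioo 0 p, p * (p.choose j / p * n ^ j) = n ^ j * p.choose j := by
    intro j hj
    obtain ⟨hj₀, hjp⟩ := mem_Ioo.mp hj
    rw [← mul_assoc, Nat.mul_div_cancel' (hp.dvd_choose_self hj₀.ne' hjp)]
    ring
  rw [add_pow, sum_range_succ, hrange, sum_insert (by simp), mul_sum, sum_congr rfl hdiv]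
  simp only [Nat.cast_id, one_pow, mul_one, Nat.choose_self, Nat.choose_zero_right, pow_zero]
  ring

namespace IsThetaRing

variable {p : ℕ} {A : Type*} [CommRing A] {θ ψ : A → A}

theorem theta_zero (h : IsThetaRing p θ ψ) : θ 0 = 0 := by
  have h00 := h.theta_add 0 0
  rw [sum_eq_zero fun j hj => by simp [(mem_Ioo.mp hj).1.ne']] at h00
  simpa using h00

theorem psi_pow (h : IsThetaRing p θ ψ) (a : A) (n : ℕ) : ψ (a ^ n) = ψ a ^ n := by
  induction n with
  | zero => simpa using h.psi_one
  | succ n ih => rw [pow_succ, h.psi_mul, ih, pow_succ]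

theorem theta_pow (h : IsThetaRing p θ ψ) (a : A) (n : ℕ) :
    θ (a ^ n) = θ a * ∑ i ∈ range n, (a ^ p) ^ i * ψ a ^ (n - 1 - i) := by
  induction n with
  | zero => simpa using h.theta_one
  | succ n ih =>
    rw [pow_succ, h.theta_mul, ih, add_tsub_cancel_right, geom_sum₂_succ_eq, ← pow_mul,
      mul_comm n p, pow_mul]
    ring

theorem exists_theta_natCast (hp : p.Prime) (h : IsThetaRing p θ ψ) (n : ℕ) :
    ∃ m : ℕ, n ^ p = n + p * m ∧ θ (n : A) = m := by
  induction n with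
  | zero => exact ⟨0, by simp [hp.ne_zero], by simpa using h.theta_zero⟩
  | succ n ih =>
    obtain ⟨m, hm, hθ⟩ := ih
    refine ⟨m + ∑ j ∈ Ioo 0 p, p.choose j / p * n ^ j, ?_, ?_⟩
    · rw [Nat.add_one_pow_of_prime hp, hm]
      ring
    · rw [Nat.cast_succ, h.theta_add, hθ, h.theta_one]
      push_cast
      simp

theorem pow_succ_mul_theta_eq (hp : p.Prime) (h : IsThetaRing p θ ψ) {k : ℕ} {x : A}
    (hx : (p : A) ^ (k + 1) * x = 0) : (p : A) ^ (k + 1) * θ x = (p : A) ^ k * x ^ p := by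
  obtain ⟨m, hm, hθ⟩ := h.exists_theta_natCast hp (p ^ (k + 1))
  rw [Nat.cast_pow] at hθ
  have hdvd : p ^ (k + 1) ∣ m + p ^ k := by
    refine Nat.dvd_of_mul_dvd_mul_left hp.pos ?_
    rw [mul_add, ← pow_succ', ← pow_succ', add_comm (p * m), ← hm, ← pow_mul]
    exact pow_dvd_pow p (by nlinarith [hp.two_le])
  obtain ⟨d, hd⟩ := hdvd
  have hvanish : ((m : A) + (p : A) ^ k) * x ^ p = 0 := by
    have hxp : x ^ p = x * x ^ (p - 1) := by rw [← pow_succ', Nat.sub_add_cancel hp.one_le]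
    rw [show (m : A) + (p : A) ^ k = ((m + p ^ k : ℕ) : A) by push_cast; rfl, hd, hxp]
    push_cast
    linear_combination (d * x ^ (p - 1) : A) * hx
  have hmul : (m : A) * (x ^ p - p * θ x) + ((p : A) ^ (k + 1)) ^ p * θ x = 0 := by
    rw [← h.psi_def, ← hθ, ← h.theta_mul, hx, h.theta_zero]
  have hcast : ((p : A) ^ (k + 1)) ^ p = (p : A) ^ (k + 1) + p * m := by
    exact_mod_cast congrArg (Nat.cast : ℕ → A) hm
  linear_combination hmul - θ x * hcast - hvanish

theorem pow_mul_psi_eq_zero (hp : p.Prime) (h : IsThetaRing p θ ψ) {k : ℕ} {x : A}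
    (hx : (p : A) ^ (k + 1) * x = 0) : (p : A) ^ k * ψ x = 0 := by
  rw [h.psi_def]
  linear_combination -h.pow_succ_mul_theta_eq hp hx

theorem pow_mul_pow_succ_eq_zero (hp : p.Prime) (h : IsThetaRing p θ ψ) {k : ℕ} {x : A}
    (hx : (p : A) ^ (k + 1) * x = 0) : (p : A) ^ k * x ^ (p + 1) = 0 := by
  rw [pow_succ, ← mul_assoc, ← h.pow_succ_mul_theta_eq hp hx]
  linear_combination θ x * hx

theorem mul_theta_pow_eq_zero (h : IsThetaRing p θ ψ) {r a : A} {s c : ℕ}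
    (hs : r * a ^ s = 0) (hc : r * ψ a ^ c = 0) (hsc : ∀ i, p * i < s → c + i < s) :
    r * θ (a ^ s) = 0 := by
  rw [h.theta_pow, mul_left_comm, mul_sum, sum_eq_zero, mul_zero]
  intro i _
  by_cases hi : p * i < s
  · rw [← pow_mul_pow_sub (ψ a) (show c ≤ s - 1 - i by have := hsc i hi; omega)]
    linear_combination ((a ^ p) ^ i * ψ a ^ (s - 1 - i - c)) * hc
  · rw [← pow_mul, ← pow_mul_pow_sub a (not_lt.mp hi)]
    linear_combination (a ^ (p * i - s) * ψ a ^ (s - 1 - i)) * hs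

def nilpotencyExponent (p : ℕ) : ℕ → ℕ
  | 0 => 1
  | t + 1 => p ^ (t + 1) + p ^ t

theorem nilpotencyExponent_add_two (p t : ℕ) :
    nilpotencyExponent p (t + 2) = nilpotencyExponent p (t + 1) * p := by
  simp only [nilpotencyExponent]
  ring

theorem nilpotencyExponent_add_lt (hp : 2 ≤ p) {t i : ℕ}
    (hi : p * i < nilpotencyExponent p (t + 1)) :
    nilpotencyExponent p t + i < nilpotencyExponent p (t + 1) := by
  cases t with
  | zero =>
    simp only [nilpotencyExponent, zero_add, pow_one, pow_zero] at hi ⊢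
    have : i < 2 := by nlinarith
    omega
  | succ t =>
    rw [nilpotencyExponent_add_two, mul_comm] at hi ⊢
    have : i < nilpotencyExponent p (t + 1) := Nat.lt_of_mul_lt_mul_right hi
    nlinarith

theorem pow_mul_pow_nilpotencyExponent_eq_zero (hp : p.Prime) (h : IsThetaRing p θ ψ)
    (t k : ℕ) {a : A} (ha : (p : A) ^ (t + k) * a = 0) :
    (p : A) ^ k * a ^ nilpotencyExponent p t = 0 := by
  induction t using Nat.twoStepInduction generalizing k a with
  | zero => simpa [nilpotencyExponent] using ha
  | one => simpa [nilpotencyExponent] using h.pow_mul_pow_succ_eq_zero hp (by rwa [add_comm])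
  | more t ih₀ ih₁ =>
    have hs := ih₁ (k + 1) (by rwa [show t + 1 + (k + 1) = t + 2 + k by ring])
    have hψ := ih₀ (k + 1) (a := ψ a)
      (h.pow_mul_psi_eq_zero hp (by rwa [show t + (k + 1) + 1 = t + 2 + k by ring]))
    have hθ := h.mul_theta_pow_eq_zero hs hψ fun _ => nilpotencyExponent_add_lt hp.two_le
    rwa [nilpotencyExponent_add_two, pow_mul, ← h.pow_succ_mul_theta_eq hp hs]

end IsThetaRing

/-- If `p^e · a = 0` in a `θ^p`-ring then `a^{p^e + p^{e-1}} = 0`. -/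
theorem pow_eq_zero_of_p_pow_torsion (p : ℕ) (hp : p.Prime) (A : Type*) [CommRing A]
    (θ ψ : A → A) (h : IsThetaRing p θ ψ) (e : ℕ) (he : 1 ≤ e) (a : A)
    (ha : (p : A) ^ e * a = 0) :
    a ^ (p ^ e + p ^ (e - 1)) = 0 := by
  obtain ⟨k, rfl⟩ := Nat.exists_eq_add_of_le' he
  simpa [IsThetaRing.nilpotencyExponent] using
    h.pow_mul_pow_nilpotencyExponent_eq_zero hp (k + 1) 0 (by simpa using ha)
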